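/- arXiv:2112.01000 — 3 statements merged into one kernel-verified Lean document; each statement's English description precedes it below -/
import Mathlib

section
/- Let m ∈ ℝ and δ > 0 with cos(δm)·cos(δξ) ∈ (-1,1) for ξ in an open interval I. Then p_δ(ξ) := δ⁻¹·arccos(cos(δm)·cos(δξ)) is twice differentiable on I with p_δ''(ξ) = δ·cos(δm)·sin²(δm)·cos(δξ) / (1 - cos²(δm)·cos²(δξ))^{3/2}. -/
/-!
With `c = cos (δ m)` and `F x = arccos (c cos x)` we have `p_δ ξ = δ⁻¹ F (δ ξ)`, so by the
chain rule `p_δ' ξ = F' (δ ξ)` and `p_δ'' ξ = δ F'' (δ ξ)`. Differentiating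
`F' x = c sin x / √(1 - c² cos² x)` once more gives
`F'' x = c (1 - c²) cos x / (1 - c² cos² x)^{3/2}`, and `1 - c² = sin² (δ m)`.
-/

open Real Set

lemma rpow_three_div_two_eq_mul_sqrt {x : ℝ} (hx : 0 ≤ x) : x ^ (3 / 2 : ℝ) = x * √x := by
  rw [sqrt_eq_rpow, ← rpow_one_add' hx (by norm_num)]
  norm_num

lemma hasDerivAt_arccos_mul_cos {c x : ℝ} (hx : c * cos x ∈ Ioo (-1 : ℝ) 1) :
    HasDerivAt (fun x => arccos (c * cos x)) (c * sin x / √(1 - c ^ 2 * cos x ^ 2)) x := by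
  refine ((hasDerivAt_arccos hx.1.ne' hx.2.ne).comp x
    ((hasDerivAt_cos x).const_mul c)).congr_deriv ?_
  rw [mul_pow]
  field_simp

lemma hasDerivAt_mul_sin_div_sqrt {c x : ℝ} (hx : 0 < 1 - c ^ 2 * cos x ^ 2) :
    HasDerivAt (fun x => c * sin x / √(1 - c ^ 2 * cos x ^ 2))
      (c * (1 - c ^ 2) * cos x / (1 - c ^ 2 * cos x ^ 2) ^ (3 / 2 : ℝ)) x := by
  have hv : HasDerivAt (fun x => 1 - c ^ 2 * cos x ^ 2) (2 * c ^ 2 * cos x * sin x) x :=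
    ((((hasDerivAt_cos x).pow 2).const_mul (c ^ 2)).const_sub 1).congr_deriv (by ring)
  refine (((hasDerivAt_sin x).const_mul c).div (hv.sqrt hx.ne')
    (sqrt_pos.2 hx).ne').congr_deriv ?_
  have hs : √(1 - c ^ 2 * cos x ^ 2) ^ 2 = 1 - c ^ 2 * cos x ^ 2 := sq_sqrt hx.le
  rw [rpow_three_div_two_eq_mul_sqrt hx.le]
  field_simp
  rw [hs]
  linear_combination -c ^ 3 * cos x * (1 - c ^ 2 * cos x ^ 2) * sin_sq_add_cos_sq x

theorem deriv2_dispersion (m δ a b : ℝ) (hδ : 0 < δ)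
    (h : ∀ ξ ∈ Set.Ioo a b, Real.cos (δ * m) * Real.cos (δ * ξ) ∈ Set.Ioo (-1 : ℝ) 1) :
    DifferentiableOn ℝ
        (fun ξ : ℝ => δ⁻¹ * Real.arccos (Real.cos (δ * m) * Real.cos (δ * ξ))) (Set.Ioo a b) ∧
    ∀ ξ ∈ Set.Ioo a b,
      HasDerivAt (deriv (fun ξ : ℝ => δ⁻¹ * Real.arccos (Real.cos (δ * m) * Real.cos (δ * ξ))))
        (δ * Real.cos (δ * m) * Real.sin (δ * m) ^ 2 * Real.cos (δ * ξ) /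
          (1 - Real.cos (δ * m) ^ 2 * Real.cos (δ * ξ) ^ 2) ^ ((3 : ℝ) / 2)) ξ := by
  set c := cos (δ * m)
  have hp : ∀ ξ ∈ Ioo a b, HasDerivAt (fun ξ => δ⁻¹ * arccos (c * cos (δ * ξ)))
      (c * sin (δ * ξ) / √(1 - c ^ 2 * cos (δ * ξ) ^ 2)) ξ := fun ξ hξ =>
    (((hasDerivAt_arccos_mul_cos (h ξ hξ)).comp ξ (hasDerivAt_const_mul δ)).const_mul
      δ⁻¹).congr_deriv (by field_simp)
  refine ⟨fun ξ hξ => (hp ξ hξ).differentiableAt.differentiableWithinAt, fun ξ hξ => ?_⟩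
  have hderiv : deriv (fun ξ => δ⁻¹ * arccos (c * cos (δ * ξ))) =ᶠ[nhds ξ]
      fun ξ => c * sin (δ * ξ) / √(1 - c ^ 2 * cos (δ * ξ) ^ 2) :=
    Filter.eventually_of_mem (isOpen_Ioo.mem_nhds hξ) fun y hy => (hp y hy).deriv
  have hv : 0 < 1 - c ^ 2 * cos (δ * ξ) ^ 2 := by
    rw [← mul_pow, sub_pos, sq_lt_one_iff_abs_lt_one, abs_lt]
    exact h ξ hξ
  refine (((hasDerivAt_mul_sin_div_sqrt hv).comp ξ (hasDerivAt_const_mul δ)).congr_deriv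
    ?_).congr_of_eventuallyEq hderiv
  rw [sin_sq]
  ring
end

section
/- Fix m ∈ ℝ with m ≠ 0 and ξ ∈ ℝ. Then δ⁻¹·arccos(cos(δm)·cos(δξ)) = √(m² + ξ²) + O(δ) as δ → 0⁺; i.e., there exist C > 0 and δ₀ > 0 such that for all 0 < δ < δ₀, |δ⁻¹·arccos(cos(δm)·cos(δξ)) - √(m²+ξ²)| ≤ Cδ. -/
open Real
set_option maxHeartbeats 4000000

theorem aux_arccos_antitone : Antitone Real.arccos := by
  intro x y h
  unfold Real.arccos
  linarith [Real.monotone_arcsin h]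

theorem aux_expand_lb (x y d r : ℝ)
    (hxy : d ^ 2 * x ^ 2 + d ^ 2 * y ^ 2 = d ^ 2 * r ^ 2) :
    1 - d ^ 2 * r ^ 2 / 2 - d ^ 4 * (5 / 96 * (x ^ 4 + y ^ 4)) ≤
      (1 - (d * x) ^ 2 / 2 - d ^ 4 * x ^ 4 * (5 / 96)) *
      (1 - (d * y) ^ 2 / 2 - d ^ 4 * y ^ 4 * (5 / 96)) := by
  have hA : 0 ≤ (d * x) ^ 2 / 2 + d ^ 4 * x ^ 4 * (5 / 96) := by positivity
  have hB : 0 ≤ (d * y) ^ 2 / 2 + d ^ 4 * y ^ 4 * (5 / 96) := by positivity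
  nlinarith [mul_nonneg hA hB]

theorem aux_expand_ub (x y d r : ℝ) (hd : 0 ≤ d) (hd1 : d ≤ 1)
    (hxy : d ^ 2 * x ^ 2 + d ^ 2 * y ^ 2 = d ^ 2 * r ^ 2) :
    (1 - (d * x) ^ 2 / 2 + d ^ 4 * x ^ 4 * (5 / 96)) *
      (1 - (d * y) ^ 2 / 2 + d ^ 4 * y ^ 4 * (5 / 96)) ≤
    1 - d ^ 2 * r ^ 2 / 2 +
      d ^ 4 * (5 / 96 * (x ^ 4 + y ^ 4) + x ^ 2 * y ^ 2 / 4 + x ^ 4 * y ^ 4) := by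
  have h8 : d ^ 8 ≤ d ^ 4 := by
    calc d ^ 8 = d ^ 4 * d ^ 4 := by ring
      _ ≤ 1 * d ^ 4 := by
          apply mul_le_mul_of_nonneg_right _ (by positivity)
          exact pow_le_one₀ hd hd1
      _ = d ^ 4 := by ring
  nlinarith [mul_nonneg (mul_nonneg (pow_nonneg hd 4) (sq_nonneg (x*y))) (sq_nonneg (x*y)),
    mul_nonneg (mul_nonneg (pow_nonneg hd 4) (sq_nonneg x)) (pow_nonneg (sq_nonneg y) 2),
    mul_nonneg (mul_nonneg (pow_nonneg hd 4) (sq_nonneg y)) (pow_nonneg (sq_nonneg x) 2),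
    mul_le_mul_of_nonneg_right h8 (mul_nonneg (pow_nonneg (sq_nonneg x) 2) (pow_nonneg (sq_nonneg y) 2))]

theorem aux_step1 (x y d r : ℝ) (hd : 0 ≤ d)
    (hu4 : (d * r + d ^ 2) ^ 4 ≤ d ^ 4 * (r + 1) ^ 4)
    (hK : d ^ 4 * (x ^ 2 * y ^ 2 / 4 + 5 / 96 * (x ^ 4 + y ^ 4) + x ^ 4 * y ^ 4
        + 5 / 96 * (r + 1) ^ 4 + 1) ≤ d ^ 3 * r) :
    1 - (d * r + d ^ 2) ^ 2 / 2 + (d * r + d ^ 2) ^ 4 * (5 / 96) ≤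
      1 - d ^ 2 * r ^ 2 / 2 - d ^ 4 * (5 / 96 * (x ^ 4 + y ^ 4)) := by
  nlinarith [mul_nonneg (pow_nonneg hd 4) (sq_nonneg (x*y)),
    mul_nonneg (pow_nonneg hd 4) (mul_nonneg (pow_nonneg (sq_nonneg x) 2) (pow_nonneg (sq_nonneg y) 2)),
    pow_nonneg hd 4]

theorem aux_step2 (x y d r : ℝ) (hd : 0 ≤ d)
    (hv4 : (d * r - d ^ 2) ^ 4 ≤ d ^ 4 * (r + 1) ^ 4)
    (hK : d ^ 4 * (x ^ 2 * y ^ 2 / 4 + 5 / 96 * (x ^ 4 + y ^ 4) + x ^ 4 * y ^ 4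
        + 5 / 96 * (r + 1) ^ 4 + 1) ≤ d ^ 3 * r) :
    1 - d ^ 2 * r ^ 2 / 2 +
      d ^ 4 * (5 / 96 * (x ^ 4 + y ^ 4) + x ^ 2 * y ^ 2 / 4 + x ^ 4 * y ^ 4) ≤
      1 - (d * r - d ^ 2) ^ 2 / 2 - (d * r - d ^ 2) ^ 4 * (5 / 96) := by
  nlinarith [pow_nonneg hd 4]

theorem dispersion_continuous_limit_rate (m ξ : ℝ) (hm : m ≠ 0) :
    ∃ C > 0, ∃ δ₀ > 0, ∀ δ : ℝ, 0 < δ → δ < δ₀ →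
      |δ⁻¹ * Real.arccos (Real.cos (δ * m) * Real.cos (δ * ξ)) - Real.sqrt (m ^ 2 + ξ ^ 2)|
        ≤ C * δ := by
  have hms : 0 < m ^ 2 + ξ ^ 2 := by positivity
  set r := Real.sqrt (m ^ 2 + ξ ^ 2) with hrdef
  have hr : 0 < r := Real.sqrt_pos.2 hms
  have hr2 : r ^ 2 = m ^ 2 + ξ ^ 2 := Real.sq_sqrt hms.le
  set K : ℝ := m ^ 2 * ξ ^ 2 / 4 + 5 / 96 * (m ^ 4 + ξ ^ 4) + m ^ 4 * ξ ^ 4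
      + 5 / 96 * (r + 1) ^ 4 + 1 with hKdef
  have hK : 0 < K := by positivity
  refine ⟨1, one_pos,
    min (min (|m| + 1)⁻¹ (|ξ| + 1)⁻¹) (min (r + 1)⁻¹ (min r (r / K))), by positivity, ?_⟩
  intro δ hδ hδ'
  have hδm : δ * |m| ≤ 1 := by
    have h1 : δ < (|m| + 1)⁻¹ := lt_of_lt_of_le hδ' (le_trans (min_le_left _ _) (min_le_left _ _))
    have h2 : 0 < |m| + 1 := by positivity
    rw [lt_inv_comm₀ hδ h2] at h1
    have h3 := mul_lt_mul_of_pos_left h1 hδ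
    rw [mul_inv_cancel₀ hδ.ne'] at h3
    nlinarith [abs_nonneg m]
  have hδξ : δ * |ξ| ≤ 1 := by
    have h1 : δ < (|ξ| + 1)⁻¹ := lt_of_lt_of_le hδ' (le_trans (min_le_left _ _) (min_le_right _ _))
    have h2 : 0 < |ξ| + 1 := by positivity
    rw [lt_inv_comm₀ hδ h2] at h1
    have h3 := mul_lt_mul_of_pos_left h1 hδ
    rw [mul_inv_cancel₀ hδ.ne'] at h3
    nlinarith [abs_nonneg ξ]
  have hδr1 : δ * (r + 1) ≤ 1 := by
    have h1 : δ < (r + 1)⁻¹ := lt_of_lt_of_le hδ' (le_trans (min_le_right _ _) (min_le_left _ _))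
    have h2 : 0 < r + 1 := by positivity
    rw [lt_inv_comm₀ hδ h2] at h1
    have h3 := mul_lt_mul_of_pos_left h1 hδ
    rw [mul_inv_cancel₀ hδ.ne'] at h3
    nlinarith
  have hδle1 : δ ≤ 1 := by nlinarith
  have hδler : δ ≤ r := le_of_lt (lt_of_lt_of_le hδ'
    (le_trans (min_le_right _ _) (le_trans (min_le_right _ _) (min_le_left _ _))))
  have hδK : δ * K ≤ r := by
    have h1 : δ < r / K := lt_of_lt_of_le hδ'
      (le_trans (min_le_right _ _) (le_trans (min_le_right _ _) (min_le_right _ _)))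
    rw [lt_div_iff₀ hK] at h1
    linarith
  -- abbreviations
  have ham : |δ * m| ≤ 1 := by rw [abs_mul, abs_of_pos hδ]; exact hδm
  have haξ : |δ * ξ| ≤ 1 := by rw [abs_mul, abs_of_pos hδ]; exact hδξ
  have huv0 : 0 ≤ δ * r - δ ^ 2 := by nlinarith
  have huv1 : δ * r + δ ^ 2 ≤ 1 := by nlinarith
  have hau : |δ * r + δ ^ 2| ≤ 1 := by
    rw [abs_of_nonneg (by linarith [mul_nonneg hδ.le hr.le, sq_nonneg δ])]; exact huv1
  have hav : |δ * r - δ ^ 2| ≤ 1 := by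
    rw [abs_of_nonneg huv0]; nlinarith
  have h1 := Real.cos_bound ham
  have h2 := Real.cos_bound haξ
  have h3 := Real.cos_bound hau
  have h4 := Real.cos_bound hav
  rw [abs_le] at h1 h2 h3 h4
  rw [abs_mul, abs_of_pos hδ] at h1 h2
  rw [abs_of_nonneg (by linarith [mul_nonneg hδ.le hr.le, sq_nonneg δ] : (0:ℝ) ≤ δ * r + δ ^ 2)] at h3
  rw [abs_of_nonneg huv0] at h4
  -- bounds to use in nlinarith
  have ha4 : (δ * |m|) ^ 4 ≤ 1 := by
    have := pow_le_one₀ (by positivity) hδm (n := 4); linarith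
  have hb4 : (δ * |ξ|) ^ 4 ≤ 1 := by
    have := pow_le_one₀ (by positivity) hδξ (n := 4); linarith
  have ham2 : δ ^ 2 * m ^ 2 ≤ 1 := by
    have : (δ * |m|) ^ 2 ≤ 1 := pow_le_one₀ (by positivity) hδm
    rw [mul_pow, sq_abs] at this; linarith
  have haξ2 : δ ^ 2 * ξ ^ 2 ≤ 1 := by
    have : (δ * |ξ|) ^ 2 ≤ 1 := pow_le_one₀ (by positivity) hδξ
    rw [mul_pow, sq_abs] at this; linarith
  have hmabs4 : (δ * |m|) ^ 4 = δ ^ 4 * m ^ 4 := by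
    rw [mul_pow]; congr 1; rw [show (4:ℕ) = 2 * 2 from rfl, pow_mul, sq_abs, ← pow_mul]
  have hξabs4 : (δ * |ξ|) ^ 4 = δ ^ 4 * ξ ^ 4 := by
    rw [mul_pow]; congr 1; rw [show (4:ℕ) = 2 * 2 from rfl, pow_mul, sq_abs, ← pow_mul]
  rw [hmabs4] at h1
  rw [hξabs4] at h2
  have hu4 : (δ * r + δ ^ 2) ^ 4 ≤ δ ^ 4 * (r + 1) ^ 4 := by
    calc (δ * r + δ ^ 2) ^ 4 ≤ (δ * (r + 1)) ^ 4 := by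
          apply pow_le_pow_left₀ (by nlinarith); nlinarith
      _ = δ ^ 4 * (r + 1) ^ 4 := by ring
  have hv4 : (δ * r - δ ^ 2) ^ 4 ≤ δ ^ 4 * (r + 1) ^ 4 := by
    calc (δ * r - δ ^ 2) ^ 4 ≤ (δ * (r + 1)) ^ 4 := by
          apply pow_le_pow_left₀ huv0; nlinarith
      _ = δ ^ 4 * (r + 1) ^ 4 := by ring
  -- positivity of lower bounds for the cosines
  have hm4le : δ ^ 4 * m ^ 4 ≤ 1 := by rw [← hmabs4]; exact ha4
  have hξ4le : δ ^ 4 * ξ ^ 4 ≤ 1 := by rw [← hξabs4]; exact hb4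
  have hsqm : (δ * m) ^ 2 = δ ^ 2 * m ^ 2 := by ring
  have hsqξ : (δ * ξ) ^ 2 = δ ^ 2 * ξ ^ 2 := by ring
  have hc1pos : (0:ℝ) < Real.cos (δ * m) := by linarith [h1.1]
  have hc2pos : (0:ℝ) < Real.cos (δ * ξ) := by linarith [h2.1]
  -- product lower bound
  have hlb : (1 - (δ * m) ^ 2 / 2 - δ ^ 4 * m ^ 4 * (5 / 96)) *
      (1 - (δ * ξ) ^ 2 / 2 - δ ^ 4 * ξ ^ 4 * (5 / 96)) ≤ Real.cos (δ * m) * Real.cos (δ * ξ) := by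
    apply mul_le_mul (by linarith) (by linarith) (by linarith) hc1pos.le
  have hub : Real.cos (δ * m) * Real.cos (δ * ξ) ≤
      (1 - (δ * m) ^ 2 / 2 + δ ^ 4 * m ^ 4 * (5 / 96)) *
      (1 - (δ * ξ) ^ 2 / 2 + δ ^ 4 * ξ ^ 4 * (5 / 96)) := by
    apply mul_le_mul (by linarith) (by linarith) hc2pos.le (by linarith)
  -- the two key cosine inequalities
  have hδ4 : δ ^ 4 * K ≤ δ ^ 3 * r := by
    calc δ ^ 4 * K = δ ^ 3 * (δ * K) := by ring
      _ ≤ δ ^ 3 * r := mul_le_mul_of_nonneg_left hδK (pow_nonneg hδ.le 3)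
  have key1 : Real.cos (δ * r + δ ^ 2) ≤ Real.cos (δ * m) * Real.cos (δ * ξ) := by
    have hmξ : δ ^ 2 * m ^ 2 + δ ^ 2 * ξ ^ 2 = δ ^ 2 * r ^ 2 := by rw [hr2]; ring
    have hKK : δ ^ 4 * (m ^ 2 * ξ ^ 2 / 4 + 5 / 96 * (m ^ 4 + ξ ^ 4) + m ^ 4 * ξ ^ 4
        + 5 / 96 * (r + 1) ^ 4 + 1) ≤ δ ^ 3 * r := by rw [← hKdef]; exact hδ4
    have expand := aux_expand_lb m ξ δ r hmξ
    have step := aux_step1 m ξ δ r hδ.le hu4 hKK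
    linarith [h3.2]
  have key2 : Real.cos (δ * m) * Real.cos (δ * ξ) ≤ Real.cos (δ * r - δ ^ 2) := by
    have hmξ : δ ^ 2 * m ^ 2 + δ ^ 2 * ξ ^ 2 = δ ^ 2 * r ^ 2 := by rw [hr2]; ring
    have hKK : δ ^ 4 * (m ^ 2 * ξ ^ 2 / 4 + 5 / 96 * (m ^ 4 + ξ ^ 4) + m ^ 4 * ξ ^ 4
        + 5 / 96 * (r + 1) ^ 4 + 1) ≤ δ ^ 3 * r := by rw [← hKdef]; exact hδ4
    have expand := aux_expand_ub m ξ δ r hδ.le hδle1 hmξ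
    have step := aux_step2 m ξ δ r hδ.le hv4 hKK
    linarith [h4.1]
  -- sandwich with arccos
  have hπ : (1:ℝ) ≤ π := by linarith [Real.pi_gt_three]
  have hcosuπ : δ * r + δ ^ 2 ≤ π := le_trans huv1 hπ
  have hcosvπ : δ * r - δ ^ 2 ≤ π := by linarith [sq_nonneg δ, huv1, hπ]
  have hupper : Real.arccos (Real.cos (δ * m) * Real.cos (δ * ξ)) ≤ δ * r + δ ^ 2 := by
    calc Real.arccos (Real.cos (δ * m) * Real.cos (δ * ξ))
        ≤ Real.arccos (Real.cos (δ * r + δ ^ 2)) := aux_arccos_antitone key1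
      _ = δ * r + δ ^ 2 := Real.arccos_cos (by linarith [mul_nonneg hδ.le hr.le, sq_nonneg δ]) hcosuπ
  have hlower : δ * r - δ ^ 2 ≤ Real.arccos (Real.cos (δ * m) * Real.cos (δ * ξ)) := by
    calc δ * r - δ ^ 2 = Real.arccos (Real.cos (δ * r - δ ^ 2)) :=
          (Real.arccos_cos huv0 hcosvπ).symm
      _ ≤ Real.arccos (Real.cos (δ * m) * Real.cos (δ * ξ)) := aux_arccos_antitone key2
  rw [abs_le]
  constructor
  · have h5 : (r - 1 * δ) * δ ≤ Real.arccos (Real.cos (δ * m) * Real.cos (δ * ξ)) := by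
      linarith [hlower]
    have h6 : r - 1 * δ ≤ Real.arccos (Real.cos (δ * m) * Real.cos (δ * ξ)) / δ :=
      (le_div_iff₀ hδ).2 h5
    rw [div_eq_inv_mul] at h6
    linarith
  · have h5 : Real.arccos (Real.cos (δ * m) * Real.cos (δ * ξ)) ≤ (r + 1 * δ) * δ := by
      linarith [hupper]
    have h6 : Real.arccos (Real.cos (δ * m) * Real.cos (δ * ξ)) / δ ≤ r + 1 * δ :=
      (div_le_iff₀ hδ).2 h5
    rw [div_eq_inv_mul] at h6
    linarith
end

section
/- Let p_δ(ξ) = δ⁻¹·arccos(cos(δm)·cos(δξ)) with sin(δm) ≠ 0 and cos(δm) ≠ 0. Then for all ξ ∈ ℝ, |p_δ''(ξ)|^{1/2}·|p_δ'''(ξ)|^{1/3} cannot both vanish simultaneously: i.e., there is no ξ ∈ ℝ with p_δ''(ξ) = 0 and p_δ'''(ξ) = 0. -/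
open Real

lemma Real.cos_sq_lt_one_of_sin_ne_zero {a : ℝ} (ha : sin a ≠ 0) : cos a ^ 2 < 1 := by
  have := sin_sq_add_cos_sq a
  have : 0 < sin a ^ 2 := by positivity
  linarith

lemma Real.cos_sq_mul_cos_sq_lt_one {a : ℝ} (ha : sin a ≠ 0) (b : ℝ) :
    cos a ^ 2 * cos b ^ 2 < 1 :=
  calc cos a ^ 2 * cos b ^ 2 ≤ cos a ^ 2 * 1 := by gcongr; exact cos_sq_le_one b
    _ < 1 := by simpa using cos_sq_lt_one_of_sin_ne_zero ha

theorem deriv2_deriv3_not_both_zero_general (m δ : ℝ)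
    (hs : Real.sin (δ * m) ≠ 0) (hc : Real.cos (δ * m) ≠ 0) :
    ¬ ∃ ξ : ℝ,
      δ * Real.cos (δ * m) * Real.sin (δ * m) ^ 2 * Real.cos (δ * ξ) /
          (1 - Real.cos (δ * m) ^ 2 * Real.cos (δ * ξ) ^ 2) ^ ((3 : ℝ) / 2) = 0 ∧
      δ ^ 2 * Real.cos (δ * m) * Real.sin (δ * m) ^ 2 *
          (1 + 2 * Real.cos (δ * m) ^ 2 * Real.cos (δ * ξ) ^ 2) * Real.sin (δ * ξ) /
          (1 - Real.cos (δ * m) ^ 2 * Real.cos (δ * ξ) ^ 2) ^ ((5 : ℝ) / 2) = 0 := by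
  rintro ⟨ξ, h2, h3⟩
  have hδ : δ ≠ 0 := by rintro rfl; simp at hs
  have hD : 0 < 1 - cos (δ * m) ^ 2 * cos (δ * ξ) ^ 2 :=
    sub_pos.2 (cos_sq_mul_cos_sq_lt_one hs _)
  have hcos : cos (δ * ξ) = 0 := by
    simpa [hδ, hc, hs, (rpow_pos_of_pos hD _).ne'] using h2
  have hsin : sin (δ * ξ) = 0 := by
    have hfactor : 0 < 1 + 2 * cos (δ * m) ^ 2 * cos (δ * ξ) ^ 2 := by positivity
    simpa [hδ, hc, hs, hfactor.ne', (rpow_pos_of_pos hD _).ne'] using h3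
  simpa [hcos, hsin] using cos_sq_add_sin_sq (δ * ξ)

theorem deriv2_deriv3_not_both_zero (m δ : ℝ) (hδ : 0 < δ)
    (hs : Real.sin (δ * m) ≠ 0) (hc : Real.cos (δ * m) ≠ 0) :
    ¬ ∃ ξ : ℝ,
      δ * Real.cos (δ * m) * Real.sin (δ * m) ^ 2 * Real.cos (δ * ξ) /
          (1 - Real.cos (δ * m) ^ 2 * Real.cos (δ * ξ) ^ 2) ^ ((3 : ℝ) / 2) = 0 ∧
      δ ^ 2 * Real.cos (δ * m) * Real.sin (δ * m) ^ 2 *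
          (1 + 2 * Real.cos (δ * m) ^ 2 * Real.cos (δ * ξ) ^ 2) * Real.sin (δ * ξ) /
          (1 - Real.cos (δ * m) ^ 2 * Real.cos (δ * ξ) ^ 2) ^ ((5 : ℝ) / 2) = 0 :=
  deriv2_deriv3_not_both_zero_general m δ hs hc
end
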